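/- arXiv:2604.04840 — 2 statements merged into one kernel-verified Lean document; each statement's English description precedes it below -/
import Mathlib

section
/- For real parameters with Re(b) > 0 and ξ ≠ η, the definite integral ∫₀^z t^{b-1} e^{-t} Φ(ξ,b,t) Φ(η,b,t) dt equals (e^{-z} z^b / (b(η-ξ))) · [η Φ(ξ,b,z) Φ(η+1,b+1,z) − ξ Φ(η,b,z) Φ(ξ+1,b+1,z)], where Φ is the confluent hypergeometric function of the first kind. -/
open Real

/-- The confluent hypergeometric function of the first kind
`Φ(a,b,z) = Σ_{n≥0} (a)_n / ((b)_n n!) z^n`. -/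
noncomputable def Phi (a b z : ℝ) : ℝ :=
  ∑' n : ℕ, ((ascPochhammer ℝ n).eval a / ((ascPochhammer ℝ n).eval b * (n.factorial : ℝ))) * z ^ n

/-! Kummer's function `y = Φ(a, b, ·)` solves `x y'' + (b - x) y' = a y`, that is
`(x^b e^{-x} y')' = a x^{b-1} e^{-x} y`. Hence for the solutions `y_ξ`, `y_η` the weighted
Wronskian `x^b e^{-x} (y_ξ' y_η - y_η' y_ξ)` has derivative `(ξ - η) x^{b-1} e^{-x} y_ξ y_η`; it
vanishes at `0` because `b > 0`, so the integral is its value at `z` divided by `ξ - η`, and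
`Φ'(a, b, x) = (a / b) Φ(a + 1, b + 1, x)` turns that value into the stated formula. -/

noncomputable def phiCoeff (a b : ℝ) (n : ℕ) : ℝ :=
  (ascPochhammer ℝ n).eval a / ((ascPochhammer ℝ n).eval b * (n.factorial : ℝ))

lemma ascPochhammer_eval_succ_left (a : ℝ) (n : ℕ) :
    (ascPochhammer ℝ (n + 1)).eval a = a * (ascPochhammer ℝ n).eval (a + 1) := by
  simp [ascPochhammer_succ_left, Polynomial.eval_comp]

lemma abs_ascPochhammer_eval_le {b : ℝ} (hb : 0 < b) (a : ℝ) (n : ℕ) :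
    |(ascPochhammer ℝ n).eval a| ≤ ((b + |a|) / b) ^ n * (ascPochhammer ℝ n).eval b := by
  induction n with
  | zero => simp
  | succ n ih =>
    have hfactor : |a + n| ≤ (b + |a|) / b * (b + n) := by
      rw [div_mul_eq_mul_div, le_div_iff₀ hb]
      nlinarith [abs_add_le a n, abs_nonneg a, (n.cast_nonneg : (0 : ℝ) ≤ n),
        (Nat.abs_cast n : |(n : ℝ)| = n)]
    rw [ascPochhammer_succ_eval, ascPochhammer_succ_eval, abs_mul, pow_succ]
    calc |(ascPochhammer ℝ n).eval a| * |a + n|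
        ≤ ((b + |a|) / b) ^ n * (ascPochhammer ℝ n).eval b * ((b + |a|) / b * (b + n)) :=
          mul_le_mul ih hfactor (abs_nonneg _)
            (mul_nonneg (by positivity) (ascPochhammer_pos n b hb).le)
      _ = _ := by ring

lemma abs_phiCoeff_le {b : ℝ} (hb : 0 < b) (a : ℝ) (n : ℕ) :
    |phiCoeff a b n| ≤ ((b + |a|) / b) ^ n / n.factorial := by
  have hden : 0 < (ascPochhammer ℝ n).eval b * (n.factorial : ℝ) :=
    mul_pos (ascPochhammer_pos n b hb) (by positivity)
  rw [phiCoeff, abs_div, abs_of_pos hden, div_le_div_iff₀ hden (by positivity), ← mul_assoc]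
  exact mul_le_mul_of_nonneg_right (abs_ascPochhammer_eval_le hb a n) (by positivity)

lemma succ_mul_phiCoeff_succ {b : ℝ} (hb : 0 < b) (a : ℝ) (n : ℕ) :
    (n + 1) * (b + n) * phiCoeff a b (n + 1) = (a + n) * phiCoeff a b n := by
  have hpoch := (ascPochhammer_pos n b hb).ne'
  have hbn : b + (n : ℝ) ≠ 0 := by positivity
  rw [phiCoeff, phiCoeff, ascPochhammer_succ_eval, ascPochhammer_succ_eval, Nat.factorial_succ]
  push_cast
  field_simp

lemma div_mul_phiCoeff_add_one (a b : ℝ) (n : ℕ) :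
    a / b * phiCoeff (a + 1) (b + 1) n = (n + 1) * phiCoeff a b (n + 1) := by
  have hn : (n : ℝ) + 1 ≠ 0 := by positivity
  rw [phiCoeff, phiCoeff, ascPochhammer_eval_succ_left, ascPochhammer_eval_succ_left,
    Nat.factorial_succ, Nat.cast_mul, Nat.cast_succ, mul_left_comm _ ((n : ℝ) + 1),
    mul_div_assoc' _ (a * _), mul_div_mul_left _ _ hn, div_mul_div_comm, mul_assoc b]

lemma summable_phiCoeff_mul_pow {b : ℝ} (hb : 0 < b) (a x : ℝ) :
    Summable fun n ↦ phiCoeff a b n * x ^ n := by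
  refine .of_norm_bounded (summable_pow_div_factorial ((b + |a|) / b * |x|)) fun n ↦ ?_
  rw [norm_mul, norm_pow, Real.norm_eq_abs, Real.norm_eq_abs, mul_pow, mul_div_right_comm]
  exact mul_le_mul_of_nonneg_right (abs_phiCoeff_le hb a n) (by positivity)

lemma hasSum_Phi {b : ℝ} (hb : 0 < b) (a x : ℝ) :
    HasSum (fun n ↦ phiCoeff a b n * x ^ n) (Phi a b x) :=
  (summable_phiCoeff_mul_pow hb a x).hasSum

lemma HasSum.mul_pow_of_succ {g : ℕ → ℝ} {x s : ℝ} (h : HasSum (fun n ↦ g (n + 1) * x ^ n) s) :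
    HasSum (fun n ↦ g n * x ^ n) (x * s + g 0) := by
  have hshift : HasSum (fun n ↦ g (n + 1) * x ^ (n + 1)) (x * s) :=
    (h.mul_left x).congr_fun fun n ↦ by ring
  simpa using (hasSum_nat_add_iff (f := fun n ↦ g n * x ^ n) 1).mp hshift

lemma hasSum_succ_mul_phiCoeff_succ {b : ℝ} (hb : 0 < b) (a x : ℝ) :
    HasSum (fun n : ℕ ↦ (n + 1) * phiCoeff a b (n + 1) * x ^ n) (a / b * Phi (a + 1) (b + 1) x) :=
  ((hasSum_Phi (b := b + 1) (by linarith) (a + 1) x).mul_left (a / b)).congr_fun fun n ↦ by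
    rw [← mul_assoc, div_mul_phiCoeff_add_one]

lemma norm_phiCoeff_mul_deriv_pow_le {b : ℝ} (hb : 0 < b) (a : ℝ) {R y : ℝ} (hR : 1 ≤ R)
    (hy : |y| ≤ R) (n : ℕ) :
    ‖phiCoeff a b n * (n * y ^ (n - 1))‖ ≤ (2 * ((b + |a|) / b) * R) ^ n / n.factorial := by
  have hpow : |y| ^ (n - 1) ≤ R ^ n :=
    (pow_le_pow_left₀ (abs_nonneg y) hy _).trans (pow_le_pow_right₀ hR (n.sub_le 1))
  have hn : (n : ℝ) ≤ 2 ^ n := by exact_mod_cast n.lt_two_pow_self.le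
  rw [Real.norm_eq_abs, abs_mul, abs_mul, abs_pow, Nat.abs_cast, mul_pow, mul_pow, mul_comm (2 ^ n),
    mul_assoc, mul_div_right_comm]
  exact mul_le_mul (abs_phiCoeff_le hb a n) (mul_le_mul hn hpow (by positivity) (by positivity))
    (by positivity) (by positivity)

lemma hasDerivAt_Phi {b : ℝ} (hb : 0 < b) (a x : ℝ) :
    HasDerivAt (Phi a b) (a / b * Phi (a + 1) (b + 1) x) x := by
  have hR : 1 ≤ |x| + 1 := by linarith [abs_nonneg x]
  have hx : x ∈ Metric.ball (0 : ℝ) (|x| + 1) := by simp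
  have hderiv := hasDerivAt_tsum_of_isPreconnected
    (summable_pow_div_factorial (2 * ((b + |a|) / b) * (|x| + 1))) Metric.isOpen_ball
    (convex_ball (0 : ℝ) _).isPreconnected
    (fun n y _ ↦ (hasDerivAt_pow n y).const_mul (phiCoeff a b n))
    (fun n y hy ↦ norm_phiCoeff_mul_deriv_pow_le hb a hR
      (by simpa using (Metric.mem_ball.mp hy).le) n)
    hx (summable_phiCoeff_mul_pow hb a x) hx
  have hsum : HasSum (fun n : ℕ ↦ phiCoeff a b n * (n * x ^ (n - 1)))
      (a / b * Phi (a + 1) (b + 1) x) := by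
    refine (hasSum_nat_add_iff' 1).mp ?_
    simpa [mul_comm, mul_left_comm, mul_assoc] using hasSum_succ_mul_phiCoeff_succ hb a x
  exact hsum.tsum_eq ▸ hderiv

lemma continuous_Phi {b : ℝ} (hb : 0 < b) (a : ℝ) : Continuous (Phi a b) :=
  continuous_iff_continuousAt.mpr fun x ↦ (hasDerivAt_Phi hb a x).continuousAt

lemma hasDerivAt_div_mul_Phi {b : ℝ} (hb : 0 < b) (a x : ℝ) :
    HasDerivAt (fun y ↦ a / b * Phi (a + 1) (b + 1) y)
      (a / b * ((a + 1) / (b + 1) * Phi (a + 2) (b + 2) x)) x := by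
  have h := (hasDerivAt_Phi (b := b + 1) (by linarith) (a + 1) x).const_mul (a / b)
  rwa [add_assoc a, add_assoc b, one_add_one_eq_two] at h

/-- Kummer's equation `x y'' + (b - x) y' = a y` for `y = Φ(a, b, ·)`, with `y'` and `y''`
expressed through `hasDerivAt_Phi`. -/
lemma Phi_kummer {b : ℝ} (hb : 0 < b) (a x : ℝ) :
    x * (a / b * ((a + 1) / (b + 1) * Phi (a + 2) (b + 2) x))
      + (b - x) * (a / b * Phi (a + 1) (b + 1) x) = a * Phi a b x := by
  have h₁ := hasSum_succ_mul_phiCoeff_succ hb a x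
  have h₂ := (hasSum_succ_mul_phiCoeff_succ (b := b + 1) (by linarith) (a + 1) x).mul_left (a / b)
  rw [add_assoc a, add_assoc b, one_add_one_eq_two] at h₂
  have hx₂ : HasSum (fun n : ℕ ↦ n * ((n + 1) * phiCoeff a b (n + 1)) * x ^ n)
      (x * (a / b * ((a + 1) / (b + 1) * Phi (a + 2) (b + 2) x))) := by
    simpa using HasSum.mul_pow_of_succ (g := fun m : ℕ ↦ m * ((m + 1) * phiCoeff a b (m + 1)))
      (h₂.congr_fun fun n ↦ by
        have := div_mul_phiCoeff_add_one a b (n + 1)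
        push_cast at this ⊢
        linear_combination (-((n : ℝ) + 1) * x ^ n) * this)
  have hx₁ : HasSum (fun n : ℕ ↦ n * phiCoeff a b n * x ^ n)
      (x * (a / b * Phi (a + 1) (b + 1) x)) := by
    simpa using HasSum.mul_pow_of_succ (g := fun m : ℕ ↦ m * phiCoeff a b m)
      (h₁.congr_fun fun n ↦ by push_cast; ring)
  have hcombination := ((hx₂.add (h₁.mul_left b)).sub hx₁).sub ((hasSum_Phi hb a x).mul_left a)
  have hsum_eq_zero : HasSum (fun _ : ℕ ↦ (0 : ℝ)) _ := hcombination.congr_fun fun n ↦ by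
    linear_combination (-x ^ n) * succ_mul_phiCoeff_succ hb a n
  linarith [hsum_eq_zero.unique hasSum_zero]

lemma hasDerivAt_rpow_mul_exp_mul_wronskian {a₁ a₂ b t p₁ p₂ : ℝ} {y₁ y₂ d₁ d₂ : ℝ → ℝ}
    (ht : 0 < t)
    (hy₁ : HasDerivAt y₁ (d₁ t) t) (hd₁ : HasDerivAt d₁ p₁ t)
    (hk₁ : t * p₁ + (b - t) * d₁ t = a₁ * y₁ t)
    (hy₂ : HasDerivAt y₂ (d₂ t) t) (hd₂ : HasDerivAt d₂ p₂ t)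
    (hk₂ : t * p₂ + (b - t) * d₂ t = a₂ * y₂ t) :
    HasDerivAt (fun s ↦ s ^ b * exp (-s) * (d₁ s * y₂ s - d₂ s * y₁ s))
      ((a₁ - a₂) * (t ^ (b - 1) * exp (-t) * y₁ t * y₂ t)) t := by
  have htb : t ^ b = t ^ (b - 1) * t := by rw [← rpow_add_one ht.ne']; ring_nf
  have hweight : HasDerivAt (fun s ↦ s ^ b * exp (-s)) (t ^ (b - 1) * exp (-t) * (b - t)) t := by
    have hexp : HasDerivAt (fun s ↦ exp (-s)) (-exp (-t)) t := by
      simpa using (hasDerivAt_neg t).exp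
    refine ((hasDerivAt_rpow_const (p := b) (Or.inl ht.ne')).mul hexp).congr_deriv ?_
    rw [htb]
    ring
  refine (hweight.mul ((hd₁.mul hy₂).sub (hd₂.mul hy₁))).congr_deriv ?_
  simp only [Pi.mul_apply, Pi.sub_apply]
  rw [htb]
  linear_combination (t ^ (b - 1) * exp (-t)) * (y₂ t * hk₁ - y₁ t * hk₂)

lemma integral_eq_rpow_mul_exp_mul_of_hasDerivAt {b z : ℝ} (hb : 0 < b) (hz : 0 ≤ z)
    {W g : ℝ → ℝ} (hW : ContinuousOn W (Set.Icc 0 z))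
    (hderiv : ∀ t, 0 < t → HasDerivAt (fun s ↦ s ^ b * exp (-s) * W s) (g t) t)
    (hg : IntervalIntegrable g MeasureTheory.volume 0 z) :
    ∫ t in (0 : ℝ)..z, g t = z ^ b * exp (-z) * W z := by
  have hcont : ContinuousOn (fun s ↦ s ^ b * exp (-s) * W s) (Set.Icc 0 z) :=
    (((continuous_rpow_const hb.le).mul (continuous_exp.comp continuous_neg)).continuousOn).mul hW
  rw [intervalIntegral.integral_eq_sub_of_hasDeriv_right_of_le hz hcont
    (fun t ht ↦ (hderiv t ht.1).hasDerivWithinAt) hg, zero_rpow hb.ne', zero_mul, zero_mul,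
    sub_zero]

lemma intervalIntegrable_rpow_mul_exp_mul_Phi_mul_Phi {b : ℝ} (hb : 0 < b) (ξ η z : ℝ) :
    IntervalIntegrable (fun t ↦ t ^ (b - 1) * exp (-t) * Phi ξ b t * Phi η b t)
      MeasureTheory.volume 0 z := by
  have hcont : Continuous fun t ↦ exp (-t) * Phi ξ b t * Phi η b t :=
    ((continuous_exp.comp continuous_neg).mul (continuous_Phi hb ξ)).mul (continuous_Phi hb η)
  simpa only [mul_assoc] using
    (intervalIntegral.intervalIntegrable_rpow' (by linarith : -1 < b - 1)).mul_continuousOn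
      hcont.continuousOn

theorem stmt0 (ξ η b z : ℝ) (hb : 0 < b) (hz : 0 < z) (hne : ξ ≠ η) :
    ∫ t in (0 : ℝ)..z, t ^ (b - 1) * Real.exp (-t) * Phi ξ b t * Phi η b t =
      Real.exp (-z) * z ^ b / (b * (η - ξ)) *
        (η * Phi ξ b z * Phi (η + 1) (b + 1) z - ξ * Phi η b z * Phi (ξ + 1) (b + 1) z) := by
  have hW : Continuous fun t ↦
      ξ / b * Phi (ξ + 1) (b + 1) t * Phi η b t - η / b * Phi (η + 1) (b + 1) t * Phi ξ b t := by
    have hb₁ : 0 < b + 1 := by linarith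
    exact ((continuous_const.mul (continuous_Phi hb₁ _)).mul (continuous_Phi hb _)).sub
      ((continuous_const.mul (continuous_Phi hb₁ _)).mul (continuous_Phi hb _))
  have hftc := integral_eq_rpow_mul_exp_mul_of_hasDerivAt hb hz.le hW.continuousOn
    (fun t ht ↦ hasDerivAt_rpow_mul_exp_mul_wronskian ht
      (hasDerivAt_Phi hb ξ t) (hasDerivAt_div_mul_Phi hb ξ t) (Phi_kummer hb ξ t)
      (hasDerivAt_Phi hb η t) (hasDerivAt_div_mul_Phi hb η t) (Phi_kummer hb η t))
    ((intervalIntegrable_rpow_mul_exp_mul_Phi_mul_Phi hb ξ η z).const_mul (ξ - η))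
  rw [intervalIntegral.integral_const_mul] at hftc
  have hηξ : η - ξ ≠ 0 := sub_ne_zero.mpr hne.symm
  field_simp at hftc ⊢
  linear_combination -hftc
end

section
/- For real b > 0, z > 0, and β > 0, the function a*(ζ) = −1 + b − (1/4)[(z/ζ)^{1/2}(2√β − √z) + √ζ]² solves the initial value problem ∂a*/∂ζ = (−1−a*+b)/ζ − √(−1−a*+b)/√ζ with a*(z) = −1 + b − β, on an interval where −1 − a*(ζ) + b > 0 and 2√β ≥ √z. -/
open Real

theorem stmt7 (b z β : ℝ) (hb : 0 < b) (hz : 0 < z) (hβ : 0 < β)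
    (hzβ : Real.sqrt z ≤ 2 * Real.sqrt β)
    (A : ℝ → ℝ)
    (hA : A = fun ζ : ℝ =>
      -1 + b - (1 / 4) * ((z / ζ) ^ ((1 : ℝ) / 2) * (2 * Real.sqrt β - Real.sqrt z)
        + Real.sqrt ζ) ^ 2) :
    A z = -1 + b - β ∧
    ∀ ζ : ℝ, 0 < ζ → 0 < -1 - A ζ + b →
      HasDerivAt A ((-1 - A ζ + b) / ζ - Real.sqrt (-1 - A ζ + b) / Real.sqrt ζ) ζ := by
  have hc0 : 0 ≤ 2 * Real.sqrt β - Real.sqrt z := by linarith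
  have hA' : A = fun ζ : ℝ =>
      -1 + b - (1 / 4) * (Real.sqrt z / Real.sqrt ζ * (2 * Real.sqrt β - Real.sqrt z)
        + Real.sqrt ζ) ^ 2 := by
    rw [hA]; funext t
    rw [← Real.sqrt_eq_rpow, Real.sqrt_div hz.le]
  constructor
  · rw [hA']
    have hsz : Real.sqrt z ≠ 0 := ne_of_gt (Real.sqrt_pos.mpr hz)
    show -1 + b - (1 / 4) * (Real.sqrt z / Real.sqrt z * (2 * Real.sqrt β - Real.sqrt z)
        + Real.sqrt z) ^ 2 = -1 + b - β
    rw [div_self hsz]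
    have h1 : 1 * (2 * Real.sqrt β - Real.sqrt z) + Real.sqrt z = 2 * Real.sqrt β := by ring
    rw [h1, show (2 * Real.sqrt β) ^ 2 = 4 * Real.sqrt β ^ 2 by ring, Real.sq_sqrt hβ.le]
    ring
  · intro ζ hζ hpos
    have hs : 0 < Real.sqrt ζ := Real.sqrt_pos.mpr hζ
    have hs0 : Real.sqrt ζ ≠ 0 := ne_of_gt hs
    have hs2 : Real.sqrt ζ ^ 2 = ζ := Real.sq_sqrt hζ.le
    set c := 2 * Real.sqrt β - Real.sqrt z with hcdef
    set s := Real.sqrt ζ with hsdef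
    have hAval : -1 - A ζ + b = (1 / 4) * (Real.sqrt z / s * c + s) ^ 2 := by
      rw [hA']; ring
    have hu0 : 0 ≤ Real.sqrt z / s * c + s := by
      have hz' := Real.sqrt_nonneg z
      positivity
    have hsqrtA : Real.sqrt (-1 - A ζ + b) = (Real.sqrt z / s * c + s) / 2 := by
      rw [hAval]
      have h5 : (1 / 4) * (Real.sqrt z / s * c + s) ^ 2
          = ((Real.sqrt z / s * c + s) / 2) ^ 2 := by ring
      rw [h5, Real.sqrt_sq (by positivity)]
    have h1 : HasDerivAt Real.sqrt (1 / (2 * s)) ζ := Real.hasDerivAt_sqrt (ne_of_gt hζ)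
    have h2 : HasDerivAt (fun t => Real.sqrt z / Real.sqrt t)
        ((0 * s - Real.sqrt z * (1 / (2 * s))) / s ^ 2) ζ :=
      (hasDerivAt_const ζ (Real.sqrt z)).div h1 hs0
    have h3 : HasDerivAt (fun t => Real.sqrt z / Real.sqrt t * c + Real.sqrt t)
        ((0 * s - Real.sqrt z * (1 / (2 * s))) / s ^ 2 * c + 1 / (2 * s)) ζ :=
      (h2.mul_const c).add h1
    have h4 : HasDerivAt (fun t => -1 + b - (1 / 4) *
        (Real.sqrt z / Real.sqrt t * c + Real.sqrt t) ^ 2)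
        (-((1 / 4) * (2 * (Real.sqrt z / s * c + s) ^ 1 *
          ((0 * s - Real.sqrt z * (1 / (2 * s))) / s ^ 2 * c + 1 / (2 * s))))) ζ :=
      ((h3.pow 2).const_mul (1 / 4)).const_sub (-1 + b)
    rw [hA']
    convert h4 using 1
    rw [← hA', hsqrtA, hAval, ← hs2]
    field_simp
    ring
end
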